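/- Let 𝒯 be a pretriangulated category with a four-periodic semiorthogonal decomposition 𝒯 = ⟨𝒜, ℬ⟩ = ⟨ℬ, 𝒞⟩ = ⟨𝒞, 𝒟⟩ = ⟨𝒟, 𝒜⟩. Let i_𝒜, i_ℬ, i_𝒞, i_𝒟 denote the inclusion functors, let R_𝒜 : 𝒯 → 𝒜 be a right adjoint to i_𝒜, let R_𝒞 : 𝒯 → 𝒞 be a right adjoint to i_𝒞, let L_ℬ : 𝒯 → ℬ be a left adjoint to i_ℬ, and let L_𝒟 : 𝒯 → 𝒟 be a left adjoint to i_𝒟 (such adjoints exist by the semiorthogonal decompositions). Then for every object B of ℬ there is a distinguished triangle (i_ℬ L_ℬ i_𝒜 R_𝒜 i_ℬ)(B) → i_ℬ(B) → (i_ℬ L_ℬ i_𝒟 L_𝒟 i_ℬ)(B) → (i_ℬ L_ℬ i_𝒜 R_𝒜 i_ℬ)(B)[1] in 𝒯, and for every object A of 𝒜 there is a distinguished triangle (i_𝒜 R_𝒜 i_𝒞 R_𝒞 i_𝒜)(A) → i_𝒜(A) → (i_𝒜 R_𝒜 i_ℬ L_ℬ i_𝒜)(A) → (i_𝒜 R_𝒜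 i_𝒞 R_𝒞 i_𝒜)(A)[1] in 𝒯. -/

import Mathlib

/-!
For `B ∈ ℬ` take the `⟨𝒟, 𝒜⟩`-triangle `A → B → D` (so `A ≅ R𝒜 B`, `D ≅ L𝒟 B`) and the
`⟨ℬ, 𝒞⟩`-triangle `C → A → B'` (so `B' ≅ Lℬ A`). Since `Hom(𝒞, ℬ) = 0`, the map `A → B` factors
through `B'`; complete `B' → B` to a distinguished triangle `B' → B → Y`. Then `Y ∈ ℬ`, and the
induced map of triangles has third component `D → Y` inverted by `Hom(-, E)` for every `E ∈ ℬ`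
(five lemma, as `A → B'` and its shift are), so `Y ≅ Lℬ D`. The triangle for `A ∈ 𝒜` is built
dually from the `⟨ℬ, 𝒞⟩`-triangle of `A` and the `⟨𝒟, 𝒜⟩`-triangle of `R𝒞 A`.
-/

open CategoryTheory Category Limits Pretriangulated

universe v u

namespace CategoryTheory.Triangulated

/-- The structure `Triangulated.Subcategory` of the older Mathlib (removed since), restated
with its old definition. -/
structure Subcategory (C : Type*) [Category C] [HasZeroObject C] [HasShift C ℤ]
    [Preadditive C] [∀ (n : ℤ), (shiftFunctor C n).Additive] [Pretriangulated C] where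
  P : C → Prop
  zero' : ∃ (Z : C) (_ : IsZero Z), P Z
  shift (X : C) (n : ℤ) : P X → P (X⟦n⟧)
  ext₂' (T : Triangle C) : T ∈ distTriang C → P T.obj₁ → P T.obj₃ →
    ObjectProperty.isoClosure P T.obj₂

end CategoryTheory.Triangulated

/-- A semiorthogonal decomposition `𝒯 = ⟨𝒜, ℬ⟩`: `Hom(B, A) = 0` for `B ∈ ℬ`, `A ∈ 𝒜`,
and every object `T` fits into a distinguished triangle `B ⟶ T ⟶ A ⟶ B⟦1⟧` with `B ∈ ℬ`
and `A ∈ 𝒜`. -/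
def IsSOD {C : Type*} [Category.{v} C] [HasZeroObject C] [HasShift C ℤ] [Preadditive C]
    [∀ (n : ℤ), (shiftFunctor C n).Additive] [Pretriangulated C]
    (A B : Triangulated.Subcategory C) : Prop :=
  (∀ (X Y : C), B.P X → A.P Y → ∀ (f : X ⟶ Y), f = 0) ∧
    ∀ (T : C), ∃ (X Y : C) (_ : B.P X) (_ : A.P Y) (f : X ⟶ T) (g : T ⟶ Y)
      (h : Y ⟶ X⟦(1 : ℤ)⟧), Triangle.mk f g h ∈ distTriang C

namespace CategoryTheory.ObjectProperty

variable {C : Type u} [Category.{v} C] {P : ObjectProperty C}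

section Shift

variable [HasShift C ℤ] [P.IsStableUnderShift ℤ]

lemma isLocal_shift {X Y : C} {f : X ⟶ Y} (hf : P.isLocal f) (n : ℤ) : P.isLocal (f⟦n⟧') := by
  intro E hE
  let e : (E⟦-n⟧)⟦n⟧ ≅ E := (shiftFunctorCompIsoId C (-n) n (neg_add_cancel n)).app E
  let φ : ∀ Z : C, (Z ⟶ E⟦-n⟧) ≃ (Z⟦n⟧ ⟶ E) := fun _ =>
    (shiftEquiv C n).fullyFaithfulFunctor.homEquiv.trans e.homToEquiv
  have hcomm : (fun s : Y⟦n⟧ ⟶ E => f⟦n⟧' ≫ s) ∘ φ Y = φ X ∘ (f ≫ ·) := by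
    funext s
    change f⟦n⟧' ≫ s⟦n⟧' ≫ e.hom = (f ≫ s)⟦n⟧' ≫ e.hom
    rw [Functor.map_comp, assoc]
  rw [← Function.Bijective.of_comp_iff _ (φ Y).bijective, hcomm]
  exact (φ X).bijective.comp (hf _ (P.le_shift (-n) E hE))

lemma isColocal_shift {X Y : C} {f : X ⟶ Y} (hf : P.isColocal f) (n : ℤ) :
    P.isColocal (f⟦n⟧') := by
  intro E hE
  let e : E ≅ (E⟦-n⟧)⟦n⟧ := ((shiftFunctorCompIsoId C (-n) n (neg_add_cancel n)).app E).symm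
  let φ : ∀ Z : C, (E⟦-n⟧ ⟶ Z) ≃ (E ⟶ Z⟦n⟧) := fun _ =>
    (shiftEquiv C n).fullyFaithfulFunctor.homEquiv.trans e.homFromEquiv.symm
  have hcomm : (fun s : E ⟶ X⟦n⟧ => s ≫ f⟦n⟧') ∘ φ X = φ Y ∘ (· ≫ f) := by
    funext s
    change (e.hom ≫ s⟦n⟧') ≫ f⟦n⟧' = e.hom ≫ (s ≫ f)⟦n⟧'
    rw [Functor.map_comp, assoc]
  rw [← Function.Bijective.of_comp_iff _ (φ X).bijective, hcomm]
  exact (φ Y).bijective.comp (hf _ (P.le_shift (-n) E hE))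

end Shift

section Adjunction

lemma nonempty_iso_of_isLocal {L : C ⥤ P.FullSubcategory} (adj : L ⊣ P.ι) {X Y : C}
    (hY : P Y) {f : X ⟶ Y} (hf : P.isLocal f) : Nonempty (Y ≅ P.ι.obj (L.obj X)) := by
  have hη : P.isLocal (adj.unit.app X) := fun E hE =>
    isLocal_adj_unit_app adj X E ⟨⟨E, hE⟩, rfl⟩
  obtain ⟨φ, hφ⟩ : ∃ φ : Y ⟶ P.ι.obj (L.obj X), f ≫ φ = adj.unit.app X :=
    (hf _ (L.obj X).property).2 _
  have : IsIso φ := (isLocal_iff_isIso P φ hY (L.obj X).property).1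
    (P.isLocal.of_precomp f φ hf (hφ ▸ hη))
  exact ⟨asIso φ⟩

lemma nonempty_iso_of_isColocal {R : C ⥤ P.FullSubcategory} (adj : P.ι ⊣ R) {X Y : C}
    (hY : P Y) {f : Y ⟶ X} (hf : P.isColocal f) : Nonempty (Y ≅ P.ι.obj (R.obj X)) := by
  have hε : P.isColocal (adj.counit.app X) := fun E hE =>
    isColocal_adj_counit_app adj X E ⟨⟨E, hE⟩, rfl⟩
  obtain ⟨φ, hφ⟩ : ∃ φ : P.ι.obj (R.obj X) ⟶ Y, φ ≫ f = adj.counit.app X :=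
    (hf _ (R.obj X).property).2 _
  have : IsIso φ := (isColocal_iff_isIso P φ (R.obj X).property hY).1
    (P.isColocal.of_postcomp φ f hf (hφ ▸ hε))
  exact ⟨(asIso φ).symm⟩

end Adjunction

end CategoryTheory.ObjectProperty

section Pretriangulated

variable {C : Type u} [Category.{v} C] [HasZeroObject C] [HasShift C ℤ] [Preadditive C]
  [∀ n : ℤ, (shiftFunctor C n).Additive] [Pretriangulated C]

namespace CategoryTheory.Pretriangulated

variable {P : ObjectProperty C}

lemma isLocal_mor₂_of_leftOrthogonal {X Y Z : C} {f : X ⟶ Y} {g : Y ⟶ Z} {h : Z ⟶ X⟦(1 : ℤ)⟧}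
    (hT : Triangle.mk f g h ∈ distTriang C) (hX : P.leftOrthogonal X)
    (hX' : P.leftOrthogonal (X⟦(1 : ℤ)⟧)) : P.isLocal g := by
  intro E hE
  refine ⟨(injective_iff_map_eq_zero (Preadditive.leftComp E g)).2 fun s hs => ?_, fun t => ?_⟩
  · obtain ⟨s', hs'⟩ : ∃ s' : X⟦(1 : ℤ)⟧ ⟶ E, s = h ≫ s' := Triangle.yoneda_exact₃ _ hT s hs
    rw [hs', hX' s' hE, comp_zero]
  · obtain ⟨s, hs⟩ : ∃ s : Z ⟶ E, t = g ≫ s := Triangle.yoneda_exact₂ _ hT t (hX _ hE)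
    exact ⟨s, hs.symm⟩

lemma isColocal_mor₁_of_rightOrthogonal {X Y Z : C} {f : X ⟶ Y} {g : Y ⟶ Z}
    {h : Z ⟶ X⟦(1 : ℤ)⟧} (hT : Triangle.mk f g h ∈ distTriang C) (hZ : P.rightOrthogonal Z)
    (hZ' : P.rightOrthogonal (Z⟦(-1 : ℤ)⟧)) : P.isColocal f := by
  intro E hE
  refine ⟨(injective_iff_map_eq_zero (Preadditive.rightComp E f)).2 fun s hs => ?_, fun t => ?_⟩
  · obtain ⟨s', hs'⟩ : ∃ s' : E ⟶ Z⟦(-1 : ℤ)⟧, s = s' ≫ _ :=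
      Triangle.coyoneda_exact₂ _ (inv_rot_of_distTriang _ hT) s hs
    rw [hs', hZ' s' hE]
    exact zero_comp
  · obtain ⟨s, hs⟩ : ∃ s : E ⟶ X, t = s ≫ f := Triangle.coyoneda_exact₂ _ hT t (hZ _ hE)
    exact ⟨s, hs.symm⟩

lemma isLocal_hom₃_of_isLocal_hom₁ {A B D B' Y : C}
    {a : A ⟶ B} {b : B ⟶ D} {c : D ⟶ A⟦(1 : ℤ)⟧} (hT : Triangle.mk a b c ∈ distTriang C)
    {a' : B' ⟶ B} {b' : B ⟶ Y} {c' : Y ⟶ B'⟦(1 : ℤ)⟧} (hT' : Triangle.mk a' b' c' ∈ distTriang C)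
    {v : A ⟶ B'} {β : D ⟶ Y} (hv : v ≫ a' = a) (hb : b ≫ β = b') (hc : c ≫ v⟦1⟧' = β ≫ c')
    (hv₀ : P.isLocal v) (hv₁ : P.isLocal (v⟦(1 : ℤ)⟧')) : P.isLocal β := by
  have hab : a ≫ b = 0 := comp_distTriang_mor_zero₁₂ _ hT
  have hca : c' ≫ a'⟦1⟧' = 0 := comp_distTriang_mor_zero₃₁ _ hT'
  intro E hE
  refine ⟨(injective_iff_map_eq_zero (Preadditive.leftComp E β)).2 fun s hs => ?_, fun t => ?_⟩
  · change β ≫ s = 0 at hs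
    have hbs : b' ≫ s = 0 := by rw [← hb, assoc, hs, comp_zero]
    obtain ⟨s', rfl⟩ : ∃ s' : B'⟦(1 : ℤ)⟧ ⟶ E, s = c' ≫ s' :=
      Triangle.yoneda_exact₃ _ hT' s hbs
    have hcs : c ≫ v⟦1⟧' ≫ s' = 0 := by rw [← assoc, hc, assoc, hs]
    obtain ⟨q, hq⟩ : ∃ q : B⟦(1 : ℤ)⟧ ⟶ E, v⟦1⟧' ≫ s' = (-a⟦1⟧') ≫ q :=
      Triangle.yoneda_exact₃ _ (rot_of_distTriang _ hT) (v⟦1⟧' ≫ s') hcs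
    have hs' : s' = -(a'⟦1⟧' ≫ q) := (hv₁ E hE).1 (by
      simp only [hq, ← hv, Functor.map_comp, Preadditive.neg_comp, Preadditive.comp_neg, assoc])
    rw [hs', Preadditive.comp_neg, ← assoc, hca, zero_comp, neg_zero]
  · have hat : a' ≫ b ≫ t = 0 := (hv₀ E hE).1 (by
      simp only [← assoc, hv, hab, zero_comp, comp_zero])
    obtain ⟨s, hs⟩ : ∃ s : Y ⟶ E, b ≫ t = b' ≫ s := Triangle.yoneda_exact₂ _ hT' (b ≫ t) hat
    have hbt : b ≫ (t - β ≫ s) = 0 := by rw [Preadditive.comp_sub, ← assoc, hb, hs, sub_self]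
    obtain ⟨r, hr⟩ : ∃ r : A⟦(1 : ℤ)⟧ ⟶ E, t - β ≫ s = c ≫ r :=
      Triangle.yoneda_exact₃ _ hT (t - β ≫ s) hbt
    obtain ⟨r', rfl⟩ := (hv₁ E hE).2 r
    refine ⟨s + c' ≫ r', ?_⟩
    simp only [Preadditive.comp_add, ← assoc, ← hc]
    rw [assoc, ← hr, add_sub_cancel]

lemma isColocal_hom₃_of_isColocal_hom₁ {A B D A' D' : C}
    {a : A ⟶ B} {b : B ⟶ D} {c : D ⟶ A⟦(1 : ℤ)⟧} (hT : Triangle.mk a b c ∈ distTriang C)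
    {a' : A' ⟶ B} {b' : B ⟶ D'} {c' : D' ⟶ A'⟦(1 : ℤ)⟧} (hT' : Triangle.mk a' b' c' ∈ distTriang C)
    {v : A ⟶ A'} {γ : D ⟶ D'} (hv : v ≫ a' = a) (hb : b ≫ γ = b') (hc : c ≫ v⟦1⟧' = γ ≫ c')
    (hv₀ : P.isColocal v) (hv₁ : P.isColocal (v⟦(1 : ℤ)⟧')) : P.isColocal γ := by
  have hab : a ≫ b = 0 := comp_distTriang_mor_zero₁₂ _ hT
  have hca : c' ≫ a'⟦1⟧' = 0 := comp_distTriang_mor_zero₃₁ _ hT'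
  intro E hE
  refine ⟨(injective_iff_map_eq_zero (Preadditive.rightComp E γ)).2 fun s hs => ?_, fun t => ?_⟩
  · change s ≫ γ = 0 at hs
    have hsc : s ≫ c = 0 := (hv₁ E hE).1 (by
      simp only [assoc, hc, reassoc_of% hs, zero_comp])
    obtain ⟨q, rfl⟩ : ∃ q : E ⟶ B, s = q ≫ b := Triangle.coyoneda_exact₃ _ hT s hsc
    have hqb : q ≫ b' = 0 := by rw [← hb, ← assoc, hs]
    obtain ⟨g, rfl⟩ : ∃ g : E ⟶ A', q = g ≫ a' := Triangle.coyoneda_exact₂ _ hT' q hqb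
    obtain ⟨g₀, rfl⟩ := (hv₀ E hE).2 g
    simp only [assoc, reassoc_of% hv, hab, comp_zero]
  · obtain ⟨r, hr⟩ := (hv₁ E hE).2 (t ≫ c')
    change r ≫ v⟦1⟧' = t ≫ c' at hr
    have hra : r ≫ a⟦1⟧' = 0 := by
      rw [← hv, Functor.map_comp, ← assoc, hr, assoc, hca, comp_zero]
    obtain ⟨s, rfl⟩ : ∃ s : E ⟶ D, r = s ≫ c := Triangle.coyoneda_exact₁ _ hT r hra
    have htc : (t - s ≫ γ) ≫ c' = 0 := by
      rw [Preadditive.sub_comp, assoc, ← hc, ← assoc, hr, sub_self]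
    obtain ⟨q, hq⟩ : ∃ q : E ⟶ B, t - s ≫ γ = q ≫ b' :=
      Triangle.coyoneda_exact₃ _ hT' (t - s ≫ γ) htc
    refine ⟨s + q ≫ b, ?_⟩
    change (s + q ≫ b) ≫ γ = t
    rw [Preadditive.add_comp, assoc, hb, ← hq, add_sub_cancel]

lemma exists_distTriang_of_iso₁₃ {X₁ X₂ X₃ Y₁ Y₃ : C} {f : X₁ ⟶ X₂} {g : X₂ ⟶ X₃}
    {h : X₃ ⟶ X₁⟦(1 : ℤ)⟧} (hT : Triangle.mk f g h ∈ distTriang C) (e₁ : X₁ ≅ Y₁) (e₃ : X₃ ≅ Y₃) :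
    ∃ (f' : Y₁ ⟶ X₂) (g' : X₂ ⟶ Y₃) (h' : Y₃ ⟶ Y₁⟦(1 : ℤ)⟧),
      Triangle.mk f' g' h' ∈ distTriang C :=
  ⟨e₁.inv ≫ f, g ≫ e₃.hom, e₃.inv ≫ h ≫ e₁.hom⟦1⟧', isomorphic_distinguished _ hT _
    (Triangle.isoMk _ _ e₁.symm (Iso.refl _) e₃.symm (comp_id _)
      (by change (g ≫ e₃.hom) ≫ e₃.inv = 𝟙 X₂ ≫ g; simp)
      (by
        change (e₃.inv ≫ h ≫ e₁.hom⟦1⟧') ≫ e₁.inv⟦1⟧' = e₃.inv ≫ h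
        simp only [assoc, ← Functor.map_comp, e₁.hom_inv_id, Functor.map_id, comp_id]))⟩

end CategoryTheory.Pretriangulated

namespace CategoryTheory.Triangulated.Subcategory

instance (S : Subcategory C) : ObjectProperty.IsStableUnderShift S.P ℤ where
  isStableUnderShiftBy n := ⟨fun X hX => S.shift X n hX⟩

lemma ext₃ (S : Subcategory C) [ObjectProperty.IsClosedUnderIsomorphisms S.P]
    (T : Triangle C) (hT : T ∈ distTriang C) (h₁ : S.P T.obj₁) (h₂ : S.P T.obj₂) :
    S.P T.obj₃ := by
  have h₃ := S.ext₂' _ (rot_of_distTriang _ hT) h₂ (S.shift _ 1 h₁)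
  rwa [ObjectProperty.isoClosure_eq_self] at h₃

end CategoryTheory.Triangulated.Subcategory

namespace IsSOD

variable {𝒜 ℬ : Triangulated.Subcategory C}

lemma leftOrthogonal (h : IsSOD 𝒜 ℬ) {X : C} (hX : ℬ.P X) : ObjectProperty.leftOrthogonal 𝒜.P X :=
  fun _ f hY => h.1 _ _ hX hY f

lemma rightOrthogonal (h : IsSOD 𝒜 ℬ) {Y : C} (hY : 𝒜.P Y) : ObjectProperty.rightOrthogonal ℬ.P Y :=
  fun _ f hX => h.1 _ _ hX hY f

end IsSOD

section FourPeriodic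

variable {𝒜 ℬ 𝒞 𝒟 : Triangulated.Subcategory C}

open ObjectProperty

theorem exists_distTriang_LR_LL [IsClosedUnderIsomorphisms ℬ.P]
    (hℬ𝒞 : IsSOD ℬ 𝒞) (h𝒟𝒜 : IsSOD 𝒟 𝒜)
    {R𝒜 : C ⥤ FullSubcategory 𝒜.P} (adjR𝒜 : ι 𝒜.P ⊣ R𝒜)
    {Lℬ : C ⥤ FullSubcategory ℬ.P} (adjLℬ : Lℬ ⊣ ι ℬ.P)
    {L𝒟 : C ⥤ FullSubcategory 𝒟.P} (adjL𝒟 : L𝒟 ⊣ ι 𝒟.P) (B : FullSubcategory ℬ.P) :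
    ∃ (f : (ι ℬ.P).obj (Lℬ.obj ((ι 𝒜.P).obj (R𝒜.obj ((ι ℬ.P).obj B)))) ⟶ (ι ℬ.P).obj B)
      (g : (ι ℬ.P).obj B ⟶ (ι ℬ.P).obj (Lℬ.obj ((ι 𝒟.P).obj (L𝒟.obj ((ι ℬ.P).obj B)))))
      (h : (ι ℬ.P).obj (Lℬ.obj ((ι 𝒟.P).obj (L𝒟.obj ((ι ℬ.P).obj B)))) ⟶
        ((ι ℬ.P).obj (Lℬ.obj ((ι 𝒜.P).obj (R𝒜.obj ((ι ℬ.P).obj B)))))⟦(1 : ℤ)⟧),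
      Triangle.mk f g h ∈ distTriang C := by
  obtain ⟨A, D, hA, hD, a, b, c, hT⟩ := h𝒟𝒜.2 B.obj
  obtain ⟨C', B', hC', hB', u, v, w, hT₁⟩ := hℬ𝒞.2 A
  obtain ⟨a', ha'⟩ : ∃ a' : B' ⟶ B.obj, a = v ≫ a' :=
    Triangle.yoneda_exact₂ _ hT₁ a (hℬ𝒞.1 _ _ hC' B.property _)
  obtain ⟨Y, b', c', hT'⟩ := distinguished_cocone_triangle a'
  obtain ⟨β, hb, hc⟩ := complete_distinguished_triangle_morphism _ _ hT hT' v (𝟙 _)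
    ((comp_id a).trans ha')
  have hv : isLocal ℬ.P v := isLocal_mor₂_of_leftOrthogonal hT₁
    (hℬ𝒞.leftOrthogonal hC') (hℬ𝒞.leftOrthogonal (𝒞.shift _ 1 hC'))
  have hβ : isLocal ℬ.P β := isLocal_hom₃_of_isLocal_hom₁ hT hT' ha'.symm
    (hb.trans (id_comp b')) hc hv (isLocal_shift hv 1)
  obtain ⟨eA⟩ := nonempty_iso_of_isColocal adjR𝒜 hA (isColocal_mor₁_of_rightOrthogonal hT
    (h𝒟𝒜.rightOrthogonal hD) (h𝒟𝒜.rightOrthogonal (𝒟.shift _ (-1) hD)))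
  obtain ⟨eD⟩ := nonempty_iso_of_isLocal adjL𝒟 hD (isLocal_mor₂_of_leftOrthogonal hT
    (h𝒟𝒜.leftOrthogonal hA) (h𝒟𝒜.leftOrthogonal (𝒜.shift _ 1 hA)))
  obtain ⟨eB'⟩ := nonempty_iso_of_isLocal adjLℬ hB' hv
  obtain ⟨eY⟩ := nonempty_iso_of_isLocal adjLℬ (ℬ.ext₃ _ hT' hB' B.property) hβ
  exact exists_distTriang_of_iso₁₃ hT' (eB' ≪≫ (Lℬ ⋙ ι ℬ.P).mapIso eA)
    (eY ≪≫ (Lℬ ⋙ ι ℬ.P).mapIso eD)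

theorem exists_distTriang_RR_RL [IsClosedUnderIsomorphisms 𝒜.P]
    (hℬ𝒞 : IsSOD ℬ 𝒞) (h𝒟𝒜 : IsSOD 𝒟 𝒜)
    {R𝒜 : C ⥤ FullSubcategory 𝒜.P} (adjR𝒜 : ι 𝒜.P ⊣ R𝒜)
    {R𝒞 : C ⥤ FullSubcategory 𝒞.P} (adjR𝒞 : ι 𝒞.P ⊣ R𝒞)
    {Lℬ : C ⥤ FullSubcategory ℬ.P} (adjLℬ : Lℬ ⊣ ι ℬ.P) (A : FullSubcategory 𝒜.P) :
    ∃ (f : (ι 𝒜.P).obj (R𝒜.obj ((ι 𝒞.P).obj (R𝒞.obj ((ι 𝒜.P).obj A)))) ⟶ (ι 𝒜.P).obj A)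
      (g : (ι 𝒜.P).obj A ⟶ (ι 𝒜.P).obj (R𝒜.obj ((ι ℬ.P).obj (Lℬ.obj ((ι 𝒜.P).obj A)))))
      (h : (ι 𝒜.P).obj (R𝒜.obj ((ι ℬ.P).obj (Lℬ.obj ((ι 𝒜.P).obj A)))) ⟶
        ((ι 𝒜.P).obj (R𝒜.obj ((ι 𝒞.P).obj (R𝒞.obj ((ι 𝒜.P).obj A)))))⟦(1 : ℤ)⟧),
      Triangle.mk f g h ∈ distTriang C := by
  obtain ⟨C', B', hC', hB', u, v, w, hT'⟩ := hℬ𝒞.2 A.obj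
  obtain ⟨A', D, hA', hD, a, b, c, hT₁⟩ := h𝒟𝒜.2 C'
  obtain ⟨Z, y, z, hT⟩ := distinguished_cocone_triangle (a ≫ u)
  obtain ⟨γ, hb, hc⟩ := complete_distinguished_triangle_morphism _ _ hT hT' a (𝟙 _) (comp_id _)
  have ha : isColocal 𝒜.P a := isColocal_mor₁_of_rightOrthogonal hT₁
    (h𝒟𝒜.rightOrthogonal hD) (h𝒟𝒜.rightOrthogonal (𝒟.shift _ (-1) hD))
  have hγ : isColocal 𝒜.P γ := isColocal_hom₃_of_isColocal_hom₁ hT hT' rfl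
    (hb.trans (id_comp v)) hc ha (isColocal_shift ha 1)
  obtain ⟨eC'⟩ := nonempty_iso_of_isColocal adjR𝒞 hC' (isColocal_mor₁_of_rightOrthogonal hT'
    (hℬ𝒞.rightOrthogonal hB') (hℬ𝒞.rightOrthogonal (ℬ.shift _ (-1) hB')))
  obtain ⟨eB'⟩ := nonempty_iso_of_isLocal adjLℬ hB' (isLocal_mor₂_of_leftOrthogonal hT'
    (hℬ𝒞.leftOrthogonal hC') (hℬ𝒞.leftOrthogonal (𝒞.shift _ 1 hC')))
  obtain ⟨eA'⟩ := nonempty_iso_of_isColocal adjR𝒜 hA' ha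
  obtain ⟨eZ⟩ := nonempty_iso_of_isColocal adjR𝒜 (𝒜.ext₃ _ hT hA' A.property) hγ
  exact exists_distTriang_of_iso₁₃ hT (eA' ≪≫ (R𝒜 ⋙ ι 𝒜.P).mapIso eC')
    (eZ ≪≫ (R𝒜 ⋙ ι 𝒜.P).mapIso eB')

end FourPeriodic

end Pretriangulated

theorem statement11_general
    {𝒯 : Type u} [Category.{v} 𝒯] [HasZeroObject 𝒯] [HasShift 𝒯 ℤ] [Preadditive 𝒯]
    [∀ (n : ℤ), (shiftFunctor 𝒯 n).Additive] [Pretriangulated 𝒯]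
    (𝒜 ℬ 𝒞 𝒟 : Triangulated.Subcategory 𝒯)
    [ObjectProperty.IsClosedUnderIsomorphisms 𝒜.P] [ObjectProperty.IsClosedUnderIsomorphisms ℬ.P]
    (hℬ𝒞 : IsSOD ℬ 𝒞) (h𝒟𝒜 : IsSOD 𝒟 𝒜)
    (R𝒜 : 𝒯 ⥤ ObjectProperty.FullSubcategory 𝒜.P) (adjR𝒜 : ObjectProperty.ι 𝒜.P ⊣ R𝒜)
    (R𝒞 : 𝒯 ⥤ ObjectProperty.FullSubcategory 𝒞.P) (adjR𝒞 : ObjectProperty.ι 𝒞.P ⊣ R𝒞)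
    (Lℬ : 𝒯 ⥤ ObjectProperty.FullSubcategory ℬ.P) (adjLℬ : Lℬ ⊣ ObjectProperty.ι ℬ.P)
    (L𝒟 : 𝒯 ⥤ ObjectProperty.FullSubcategory 𝒟.P) (adjL𝒟 : L𝒟 ⊣ ObjectProperty.ι 𝒟.P) :
    (∀ (B : ObjectProperty.FullSubcategory ℬ.P),
      ∃ (f : (ObjectProperty.ι ℬ.P).obj
              (Lℬ.obj ((ObjectProperty.ι 𝒜.P).obj
                (R𝒜.obj ((ObjectProperty.ι ℬ.P).obj B)))) ⟶
            (ObjectProperty.ι ℬ.P).obj B)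
        (g : (ObjectProperty.ι ℬ.P).obj B ⟶
            (ObjectProperty.ι ℬ.P).obj
              (Lℬ.obj ((ObjectProperty.ι 𝒟.P).obj
                (L𝒟.obj ((ObjectProperty.ι ℬ.P).obj B)))))
        (h : (ObjectProperty.ι ℬ.P).obj
              (Lℬ.obj ((ObjectProperty.ι 𝒟.P).obj
                (L𝒟.obj ((ObjectProperty.ι ℬ.P).obj B)))) ⟶
            ((ObjectProperty.ι ℬ.P).obj
              (Lℬ.obj ((ObjectProperty.ι 𝒜.P).obj
                (R𝒜.obj ((ObjectProperty.ι ℬ.P).obj B)))))⟦(1 : ℤ)⟧),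
        Triangle.mk f g h ∈ distTriang 𝒯) ∧
    (∀ (A : ObjectProperty.FullSubcategory 𝒜.P),
      ∃ (f : (ObjectProperty.ι 𝒜.P).obj
              (R𝒜.obj ((ObjectProperty.ι 𝒞.P).obj
                (R𝒞.obj ((ObjectProperty.ι 𝒜.P).obj A)))) ⟶
            (ObjectProperty.ι 𝒜.P).obj A)
        (g : (ObjectProperty.ι 𝒜.P).obj A ⟶
            (ObjectProperty.ι 𝒜.P).obj
              (R𝒜.obj ((ObjectProperty.ι ℬ.P).obj
                (Lℬ.obj ((ObjectProperty.ι 𝒜.P).obj A)))))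
        (h : (ObjectProperty.ι 𝒜.P).obj
              (R𝒜.obj ((ObjectProperty.ι ℬ.P).obj
                (Lℬ.obj ((ObjectProperty.ι 𝒜.P).obj A)))) ⟶
            ((ObjectProperty.ι 𝒜.P).obj
              (R𝒜.obj ((ObjectProperty.ι 𝒞.P).obj
                (R𝒞.obj ((ObjectProperty.ι 𝒜.P).obj A)))))⟦(1 : ℤ)⟧),
        Triangle.mk f g h ∈ distTriang 𝒯) :=
  ⟨exists_distTriang_LR_LL hℬ𝒞 h𝒟𝒜 adjR𝒜 adjLℬ adjL𝒟,
    exists_distTriang_RR_RL hℬ𝒞 h𝒟𝒜 adjR𝒜 adjR𝒞 adjLℬ⟩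

/--
Let `𝒯` be a pretriangulated category with a four-periodic
semiorthogonal decomposition `𝒯 = ⟨𝒜, ℬ⟩ = ⟨ℬ, 𝒞⟩ = ⟨𝒞, 𝒟⟩ = ⟨𝒟, 𝒜⟩`.  Let
`i𝒜, iℬ, i𝒞, i𝒟` be the inclusions, `R𝒜` a right adjoint of `i𝒜`, `R𝒞` a right adjoint
of `i𝒞`, `Lℬ` a left adjoint of `iℬ`, and `L𝒟` a left adjoint of `i𝒟`.  Then for every
object `B` of `ℬ` there is a distinguished triangle
`(iℬ Lℬ i𝒜 R𝒜 iℬ)(B) ⟶ iℬ(B) ⟶ (iℬ Lℬ i𝒟 L𝒟 iℬ)(B) ⟶ (iℬ Lℬ i𝒜 R𝒜 iℬ)(B)⟦1⟧` in `𝒯`,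
and for every object `A` of `𝒜` there is a distinguished triangle
`(i𝒜 R𝒜 i𝒞 R𝒞 i𝒜)(A) ⟶ i𝒜(A) ⟶ (i𝒜 R𝒜 iℬ Lℬ i𝒜)(A) ⟶ (i𝒜 R𝒜 i𝒞 R𝒞 i𝒜)(A)⟦1⟧` in `𝒯`.
-/
theorem statement11
    {𝒯 : Type u} [Category.{v} 𝒯] [HasZeroObject 𝒯] [HasShift 𝒯 ℤ] [Preadditive 𝒯]
    [∀ (n : ℤ), (shiftFunctor 𝒯 n).Additive] [Pretriangulated 𝒯]
    (𝒜 ℬ 𝒞 𝒟 : Triangulated.Subcategory 𝒯)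
    [ObjectProperty.IsClosedUnderIsomorphisms 𝒜.P] [ObjectProperty.IsClosedUnderIsomorphisms ℬ.P]
    [ObjectProperty.IsClosedUnderIsomorphisms 𝒞.P] [ObjectProperty.IsClosedUnderIsomorphisms 𝒟.P]
    (h𝒜ℬ : IsSOD 𝒜 ℬ) (hℬ𝒞 : IsSOD ℬ 𝒞) (h𝒞𝒟 : IsSOD 𝒞 𝒟) (h𝒟𝒜 : IsSOD 𝒟 𝒜)
    (R𝒜 : 𝒯 ⥤ ObjectProperty.FullSubcategory 𝒜.P) (adjR𝒜 : ObjectProperty.ι 𝒜.P ⊣ R𝒜)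
    (R𝒞 : 𝒯 ⥤ ObjectProperty.FullSubcategory 𝒞.P) (adjR𝒞 : ObjectProperty.ι 𝒞.P ⊣ R𝒞)
    (Lℬ : 𝒯 ⥤ ObjectProperty.FullSubcategory ℬ.P) (adjLℬ : Lℬ ⊣ ObjectProperty.ι ℬ.P)
    (L𝒟 : 𝒯 ⥤ ObjectProperty.FullSubcategory 𝒟.P) (adjL𝒟 : L𝒟 ⊣ ObjectProperty.ι 𝒟.P) :
    (∀ (B : ObjectProperty.FullSubcategory ℬ.P),
      ∃ (f : (ObjectProperty.ι ℬ.P).obj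
              (Lℬ.obj ((ObjectProperty.ι 𝒜.P).obj
                (R𝒜.obj ((ObjectProperty.ι ℬ.P).obj B)))) ⟶
            (ObjectProperty.ι ℬ.P).obj B)
        (g : (ObjectProperty.ι ℬ.P).obj B ⟶
            (ObjectProperty.ι ℬ.P).obj
              (Lℬ.obj ((ObjectProperty.ι 𝒟.P).obj
                (L𝒟.obj ((ObjectProperty.ι ℬ.P).obj B)))))
        (h : (ObjectProperty.ι ℬ.P).obj
              (Lℬ.obj ((ObjectProperty.ι 𝒟.P).obj
                (L𝒟.obj ((ObjectProperty.ι ℬ.P).obj B)))) ⟶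
            ((ObjectProperty.ι ℬ.P).obj
              (Lℬ.obj ((ObjectProperty.ι 𝒜.P).obj
                (R𝒜.obj ((ObjectProperty.ι ℬ.P).obj B)))))⟦(1 : ℤ)⟧),
        Triangle.mk f g h ∈ distTriang 𝒯) ∧
    (∀ (A : ObjectProperty.FullSubcategory 𝒜.P),
      ∃ (f : (ObjectProperty.ι 𝒜.P).obj
              (R𝒜.obj ((ObjectProperty.ι 𝒞.P).obj
                (R𝒞.obj ((ObjectProperty.ι 𝒜.P).obj A)))) ⟶
            (ObjectProperty.ι 𝒜.P).obj A)
        (g : (ObjectProperty.ι 𝒜.P).obj A ⟶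
            (ObjectProperty.ι 𝒜.P).obj
              (R𝒜.obj ((ObjectProperty.ι ℬ.P).obj
                (Lℬ.obj ((ObjectProperty.ι 𝒜.P).obj A)))))
        (h : (ObjectProperty.ι 𝒜.P).obj
              (R𝒜.obj ((ObjectProperty.ι ℬ.P).obj
                (Lℬ.obj ((ObjectProperty.ι 𝒜.P).obj A)))) ⟶
            ((ObjectProperty.ι 𝒜.P).obj
              (R𝒜.obj ((ObjectProperty.ι 𝒞.P).obj
                (R𝒞.obj ((ObjectProperty.ι 𝒜.P).obj A)))))⟦(1 : ℤ)⟧),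
        Triangle.mk f g h ∈ distTriang 𝒯) :=
  statement11_general 𝒜 ℬ 𝒞 𝒟 hℬ𝒞 h𝒟𝒜 R𝒜 adjR𝒜 R𝒞 adjR𝒞 Lℬ adjLℬ L𝒟 adjL𝒟
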